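/- arXiv:1504.06396 — 6 statements merged into one kernel-verified Lean document; each statement's English description precedes it below -/
import Mathlib

section
/- Let N ≥ 3 be odd and let A_N be the adjacency matrix of the cycle C_N. Then for every n ≥ 1 there exist distinct vertices k, l such that (A_N)ⁿ(k,l) is odd. -/
open Polynomial Matrix

/-- Top-row half of the Hadamard matrix. -/
noncomputable def Pmat : Matrix (Fin 2) (Fin 2) ℂ :=
  ((Real.sqrt 2 : ℝ) : ℂ)⁻¹ • !![1, 1; 0, 0]

/-- Bottom-row half of the Hadamard matrix. -/
noncomputable def Qmat : Matrix (Fin 2) (Fin 2) ℂ :=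
  ((Real.sqrt 2 : ℝ) : ℂ)⁻¹ • !![0, 0; 1, -1]

/-- Auxiliary matrix R. -/
noncomputable def Rmat : Matrix (Fin 2) (Fin 2) ℂ :=
  ((Real.sqrt 2 : ℝ) : ℂ)⁻¹ • !![1, -1; 0, 0]

/-- Auxiliary matrix S. -/
noncomputable def Smat : Matrix (Fin 2) (Fin 2) ℂ :=
  ((Real.sqrt 2 : ℝ) : ℂ)⁻¹ • !![0, 0; 1, 1]

/-- The 2N×2N evolution operator of the Hadamard walk on the cycle C_N:
block (k, k+1 mod N) is P, block (k, k-1 mod N) is Q (their sum if these coincide). -/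
noncomputable def hadU (N : ℕ) : Matrix (Fin N × Fin 2) (Fin N × Fin 2) ℂ :=
  fun ki lj =>
    (if (lj.1 : ℕ) = ((ki.1 : ℕ) + 1) % N then Pmat ki.2 lj.2 else 0) +
    (if ((lj.1 : ℕ) + 1) % N = (ki.1 : ℕ) then Qmat ki.2 lj.2 else 0)

/-- Adjacency matrix of the cycle C_N (with a double edge when N = 2),
counting left and right moves separately. -/
def adjC (N : ℕ) : Matrix (Fin N) (Fin N) ℤ :=
  fun k l =>
    (if (l : ℕ) = ((k : ℕ) + 1) % N then 1 else 0) +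
    (if ((l : ℕ) + 1) % N = (k : ℕ) then 1 else 0)

/-!
Reduce modulo 2. There `A_N = P + P⁻¹` for the rotation matrix `P`, and since `P` commutes with
`P⁻¹`, Frobenius gives `A_N ^ 2 ^ k = P ^ 2 ^ k + P ^ (-2 ^ k)`. If every off-diagonal entry of
`A_N ^ n` were even, then `A_N ^ n` would be diagonal mod 2; it kills the all-ones vector because
every row of `A_N` sums to `2`, so `A_N ^ n ≡ 0`. Then `A_N ^ 2 ^ n ≡ 0` too, i.e. the rotation by
`2 ^ (n + 1)` is trivial, so `N ∣ 2 ^ (n + 1)`, which is impossible for odd `N ≥ 3`.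
-/

namespace Matrix

variable {n R : Type*} [DecidableEq n]

theorem IsDiag.eq_zero_of_mulVec_one [Fintype n] [NonAssocSemiring R] {M : Matrix n n R}
    (hM : M.IsDiag) (h : M *ᵥ 1 = 0) : M = 0 := by
  have hdiag : M.diag = 0 := by
    rw [← hM.diagonal_diag] at h
    funext i
    simpa [mulVec_diagonal] using congrFun h i
  rw [← hM.diagonal_diag, hdiag]
  exact diagonal_zero

theorem permMatrix_apply [Zero R] [One R] (σ : Equiv.Perm n) (i j : n) :
    σ.permMatrix R i j = if σ i = j then 1 else 0 := by
  simp [PEquiv.toMatrix_apply]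

theorem permMatrix_injective [MulZeroOneClass R] [Nontrivial R] :
    Function.Injective (fun σ : Equiv.Perm n => σ.permMatrix R) := by
  intro σ τ h
  ext i
  simpa using congrArg (· i) (PEquiv.toMatrix_injective h)

variable [Fintype n]

theorem permMatrix_pow [Semiring R] (σ : Equiv.Perm n) (m : ℕ) :
    (σ ^ m).permMatrix R = σ.permMatrix R ^ m := by
  induction m with
  | zero => simp
  | succ m ih => rw [pow_succ', permMatrix_mul, ih, pow_succ]

theorem permMatrix_add_inv_mulVec_one [CommRing R] [CharP R 2] (σ : Equiv.Perm n) :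
    (σ.permMatrix R + σ⁻¹.permMatrix R) *ᵥ 1 = 0 := by
  funext i
  simp [add_mulVec, permMatrix_mulVec, CharTwo.add_self_eq_zero]

theorem permMatrix_add_inv_pow_two_pow [Nonempty n] [Ring R] [CharP R 2] (σ : Equiv.Perm n)
    (k : ℕ) : (σ.permMatrix R + σ⁻¹.permMatrix R) ^ 2 ^ k =
      (σ ^ 2 ^ k).permMatrix R + (σ ^ 2 ^ k)⁻¹.permMatrix R := by
  have hcomm : Commute (σ.permMatrix R) (σ⁻¹.permMatrix R) := by
    rw [Commute, SemiconjBy, ← permMatrix_mul, ← permMatrix_mul, inv_mul_cancel, mul_inv_cancel]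
  have := Fact.mk Nat.prime_two
  rw [add_pow_char_pow_of_commute 2 k hcomm, ← permMatrix_pow, ← permMatrix_pow, inv_pow]

theorem exists_pow_two_pow_eq_one_of_isNilpotent_permMatrix_add_inv [Nonempty n] [Ring R]
    [CharP R 2] {σ : Equiv.Perm n} (h : IsNilpotent (σ.permMatrix R + σ⁻¹.permMatrix R)) :
    ∃ k, σ ^ 2 ^ k = 1 := by
  obtain ⟨m, hm⟩ := h
  have := CharP.nontrivial_of_char_ne_one (R := R) (v := 2) (by norm_num)
  have hzero := pow_eq_zero_of_le Nat.lt_two_pow_self.le hm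
  rw [permMatrix_add_inv_pow_two_pow, CharTwo.add_eq_zero] at hzero
  refine ⟨m + 1, ?_⟩
  rw [pow_succ, pow_mul, sq, mul_eq_one_iff_eq_inv]
  exact permMatrix_injective hzero

end Matrix

theorem orderOf_finRotate {n : ℕ} (hn : 2 ≤ n) : orderOf (finRotate n) = n := by
  rw [← Equiv.Perm.lcm_cycleType, cycleType_finRotate_of_le hn, Multiset.lcm_singleton,
    normalize_eq]

theorem adjC_map_intCast (N : ℕ) (R : Type*) [AddGroupWithOne R] :
    (adjC N).map (Int.cast : ℤ → R) =
      (finRotate N).permMatrix R + (finRotate N)⁻¹.permMatrix R := by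
  ext k l
  have := k.neZero
  have hsucc (i j : Fin N) : finRotate N i = j ↔ (j : ℕ) = ((i : ℕ) + 1) % N := by
    rw [finRotate_apply, Fin.ext_iff, Fin.val_add, Fin.val_one', Nat.add_mod_mod, eq_comm]
  have hpred (i j : Fin N) : (finRotate N)⁻¹ i = j ↔ ((j : ℕ) + 1) % N = i := by
    rw [Equiv.Perm.inv_eq_iff_eq, eq_comm, hsucc, eq_comm]
  simp only [map_apply, Matrix.add_apply, permMatrix_apply, hsucc, hpred, adjC, Int.cast_add,
    Int.cast_ite, Int.cast_one, Int.cast_zero]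
theorem cycle_odd_walk_count_exists (N : ℕ) (hN : 3 ≤ N) (hodd : Odd N)
    (n : ℕ) (hn : 1 ≤ n) :
    ∃ k l : Fin N, k ≠ l ∧ Odd ((adjC N ^ n) k l) := by
  by_contra! hcon
  have : NeZero N := ⟨by omega⟩
  set B := (adjC N).map (Int.cast : ℤ → ZMod 2) with hB
  have hpow : B ^ n = (adjC N ^ n).map Int.cast :=
    (Matrix.map_pow (adjC N) (Int.castRingHom (ZMod 2)) n).symm
  have hdiag : (B ^ n).IsDiag := by
    intro k l hkl
    rw [hpow]
    exact ZMod.intCast_eq_zero_iff_even.2 (Int.not_odd_iff_even.1 (hcon k l hkl))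
  have hBn : B ^ n = 0 := hdiag.eq_zero_of_mulVec_one <| by
    obtain ⟨m, rfl⟩ := Nat.exists_eq_add_of_le' hn
    rw [pow_succ, ← mulVec_mulVec, hB, adjC_map_intCast, permMatrix_add_inv_mulVec_one,
      mulVec_zero]
  obtain ⟨k, hk⟩ : ∃ k, finRotate N ^ 2 ^ k = 1 :=
    exists_pow_two_pow_eq_one_of_isNilpotent_permMatrix_add_inv (R := ZMod 2)
      (by rw [← adjC_map_intCast]; exact ⟨n, hBn⟩)
  have hdvd : N ∣ 2 ^ k := by
    rw [← orderOf_finRotate (n := N) (by omega)]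
    exact orderOf_dvd_of_pow_eq_one hk
  have := (Nat.Coprime.pow_right k hodd.coprime_two_right).eq_one_of_dvd hdvd
  omega
end

section
/- Let N = 2M+1 ≥ 3 be odd, and work over 𝔽₂ with the adjacency matrix A of the cycle C_N. If the first row of Aᵐ is (0, c₁, c₂, ..., c_{M-1}, c_M, c_M, c_{M-1}, ..., c₂, c₁) and the vector (c₁,...,c_M) is nonzero, then the first row of A^{m+1} is also nonzero off the diagonal; equivalently, the first row of Aⁿ mod 2 is never the zero vector off the diagonal for any n ≥ 1. -/
open Polynomial Matrix

/-! Every additive character `ψ` of `Fin N` is an eigenvector of the cycle's adjacency matrix,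
with eigenvalue `ψ 1 + ψ (-1)`; pairing the first row of `Aⁿ` with `ψ` therefore gives
`(ψ 1 + ψ (-1)) ^ n`. If that row vanished mod 2 off the diagonal, this power would be the same
for all characters into a field of characteristic 2. The trivial character gives `(1 + 1) ^ n = 0`,
whereas a character sending `1` to a primitive `N`-th root of unity `ζ` (which exists over `𝔽₂`
because `N` is odd) gives `(ζ + ζ⁻¹) ^ n ≠ 0`, since `ζ ^ 2 ≠ 1` for `N ≥ 3`. -/

lemma Matrix.pow_mulVec_of_mulVec_eq_smul {ι R : Type*} [Fintype ι] [DecidableEq ι]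
    [CommSemiring R] {A : Matrix ι ι R} {v : ι → R} {c : R} (h : A *ᵥ v = c • v) (n : ℕ) :
    A ^ n *ᵥ v = c ^ n • v := by
  induction n with
  | zero => simp
  | succ n ih => rw [pow_succ', ← mulVec_mulVec, ih, mulVec_smul, h, smul_smul, pow_succ]

lemma add_inv_ne_zero_of_sq_ne_one {K : Type*} [Field K] [CharP K 2] {ζ : K} (hζ0 : ζ ≠ 0)
    (hζ : ζ ^ 2 ≠ 1) : ζ + ζ⁻¹ ≠ 0 := by
  intro h
  have hsq : ζ ^ 2 + 1 = 0 := by rw [← mul_inv_cancel₀ hζ0, sq, ← mul_add, h, mul_zero]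
  exact hζ (by rwa [add_eq_zero_iff_eq_neg, CharTwo.neg_eq] at hsq)

section AddChar

variable {N : ℕ} [NeZero N] {K : Type*} [CommRing K]

lemma adjC_apply_eq_ite (k l : Fin N) :
    adjC N k l = (if l = k + 1 then 1 else 0) + (if l = k - 1 then 1 else 0) := by
  simp [adjC, eq_sub_iff_add_eq, Fin.ext_iff, Fin.val_add]

lemma adjC_map_mulVec_addChar (ψ : AddChar (Fin N) K) :
    (adjC N).map (Int.cast : ℤ → K) *ᵥ ⇑ψ = (ψ 1 + ψ (-1)) • ⇑ψ := by
  ext k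
  simp only [mulVec, dotProduct, map_apply, adjC_apply_eq_ite, sub_eq_add_neg, Int.cast_add,
    Int.cast_ite, Int.cast_one, Int.cast_zero, add_mul, ite_mul, one_mul, zero_mul,
    Finset.sum_add_distrib, Finset.sum_ite_eq', Finset.mem_univ, if_true, AddChar.map_add_eq_mul,
    Pi.smul_apply, smul_eq_mul]
  ring

lemma sum_adjC_pow_mul_addChar (ψ : AddChar (Fin N) K) (n : ℕ) :
    ∑ l, ((adjC N ^ n) 0 l : K) * ψ l = (ψ 1 + ψ (-1)) ^ n := by
  have h := congrFun (pow_mulVec_of_mulVec_eq_smul (adjC_map_mulVec_addChar ψ) n) 0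
  have hpow : (adjC N).map (Int.cast : ℤ → K) ^ n = (adjC N ^ n).map Int.cast :=
    (map_pow (Int.castRingHom K).mapMatrix _ n).symm
  rw [hpow] at h
  simpa [mulVec, dotProduct] using h

lemma addChar_pow_eq_adjC_pow_zero_zero {n : ℕ} (h : ∀ l ≠ 0, ((adjC N ^ n) 0 l : K) = 0)
    (ψ : AddChar (Fin N) K) : (ψ 1 + ψ (-1)) ^ n = ((adjC N ^ n) 0 0 : K) := by
  rw [← sum_adjC_pow_mul_addChar, Finset.sum_eq_single 0 (fun l _ hl ↦ by rw [h l hl, zero_mul])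
    (by simp), AddChar.map_zero_eq_one, mul_one]

end AddChar

theorem cycle_first_row_mod_two_nonzero (M : ℕ) (hM : 1 ≤ M)
    (n : ℕ) (hn : 1 ≤ n) :
    ∃ l : Fin (2 * M + 1), l ≠ 0 ∧
      (((adjC (2 * M + 1) ^ n) 0 l : ℤ) : ZMod 2) ≠ 0 := by
  by_contra! hrow
  set N := 2 * M + 1
  have : NeZero ((N : ℕ) : ZMod 2) :=
    ⟨fun h ↦ Nat.not_even_iff_odd.mpr (odd_two_mul_add_one M) (ZMod.natCast_eq_zero_iff_even.mp h)⟩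
  let K := CyclotomicField N (ZMod 2)
  have : CharP K 2 := charP_of_injective_algebraMap (algebraMap (ZMod 2) K).injective 2
  have hζ := IsCyclotomicExtension.zeta_spec N (ZMod 2) K
  set ζ := IsCyclotomicExtension.zeta N (ZMod 2) K
  let ψ : AddChar (Fin N) K :=
    (AddChar.zmodChar N hζ.pow_eq_one).compAddMonoidHom
      ((ZMod.finEquiv N : Fin N ≃+* ZMod N) : Fin N →+ ZMod N)
  have hψ : ψ 1 = ζ := by simpa [ψ] using AddChar.zmodChar_apply' hζ.pow_eq_one 1
  have hK : ∀ l ≠ 0, ((adjC N ^ n) 0 l : K) = 0 := fun l hl ↦ by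
    rw [← map_intCast (algebraMap (ZMod 2) K), hrow l hl, map_zero]
  have hζpow := (addChar_pow_eq_adjC_pow_zero_zero hK ψ).trans
    (addChar_pow_eq_adjC_pow_zero_zero hK 1).symm
  rw [AddChar.map_neg_eq_inv, hψ, AddChar.one_apply, AddChar.one_apply,
    CharTwo.add_self_eq_zero, zero_pow (by omega)] at hζpow
  exact add_inv_ne_zero_of_sq_ne_one (hζ.ne_zero (by omega))
    (hζ.pow_ne_one_of_pos_of_lt two_ne_zero (by omega)) (pow_eq_zero_iff (by omega) |>.mp hζpow)
end

section
/- Let U_N be the 2N×2N evolution operator of the Hadamard walk on the cycle C_N. If (U_N)ⁿ = I for some n ≥ 1, then for all vertices k, l, the number of length-n paths on C_N from k to l (equivalently the (k,l) entry of the n-th power of the adjacency matrix of C_N) is even. -/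
open Polynomial Matrix

/-!
`√2 • U_N` is an integer matrix `M`, so `U_N ^ n = 1` gives `M ^ n = (√2) ^ n • 1`; an integer
equal to `(√2) ^ n` with `n ≥ 1` is even, hence `M ^ n ≡ 0 (mod 2)`. Modulo 2, the matrix `C`
that sums over the coin intertwines `M` with the adjacency matrix `A` of `C_N`,
`C * M = A * C`, because both coin blocks have odd column sums. Therefore
`A ^ n * C = C * M ^ n ≡ 0`, and since `C` only forgets the coin, `A ^ n ≡ 0 (mod 2)`.
-/

def hadUInt (N : ℕ) : Matrix (Fin N × Fin 2) (Fin N × Fin 2) ℤ :=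
  fun ki lj =>
    (if (lj.1 : ℕ) = ((ki.1 : ℕ) + 1) % N then !![1, 1; 0, 0] ki.2 lj.2 else 0) +
    (if ((lj.1 : ℕ) + 1) % N = (ki.1 : ℕ) then !![0, 0; 1, -1] ki.2 lj.2 else 0)

theorem hadU_eq_smul_map_hadUInt (N : ℕ) :
    hadU N = ((√2 : ℝ) : ℂ)⁻¹ • (hadUInt N).map (Int.cast : ℤ → ℂ) := by
  ext ⟨k, i⟩ ⟨l, j⟩
  simp only [hadU, hadUInt, Matrix.map_apply, Matrix.smul_apply, smul_eq_mul, Int.cast_add,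
    apply_ite (Int.cast : ℤ → ℂ), Int.cast_zero, mul_add, mul_ite, mul_zero]
  congr 1 <;> split_ifs <;> fin_cases i <;> fin_cases j <;> simp [Pmat, Qmat]

theorem Matrix.map_intCast_pow {ι R : Type*} [Fintype ι] [DecidableEq ι] [Ring R]
    (M : Matrix ι ι ℤ) (n : ℕ) : (M ^ n).map (Int.cast : ℤ → R) = M.map Int.cast ^ n :=
  M.map_pow (Int.castRingHom R) n

theorem Int.even_of_cast_eq_sqrt_two_pow {a : ℤ} {n : ℕ} (hn : n ≠ 0)
    (h : (a : ℝ) = √2 ^ n) : Even a := by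
  have hsq : a ^ 2 = 2 ^ n := by
    have : (a : ℝ) ^ 2 = 2 ^ n := by
      rw [h, ← pow_mul, mul_comm, pow_mul, Real.sq_sqrt zero_le_two]
    exact_mod_cast this
  exact even_iff_two_dvd.mpr (Int.prime_two.dvd_of_dvd_pow (hsq ▸ dvd_pow_self 2 hn))

theorem Matrix.map_pow_eq_zero_of_inv_sqrt_two_smul_pow_eq_one {ι : Type*} [Fintype ι]
    [DecidableEq ι] (M : Matrix ι ι ℤ) {n : ℕ} (hn : n ≠ 0)
    (h : (((√2 : ℝ) : ℂ)⁻¹ • M.map (Int.cast : ℤ → ℂ)) ^ n = 1) :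
    (M ^ n).map (Int.cast : ℤ → ZMod 2) = 0 := by
  have hMn : (M ^ n).map (Int.cast : ℤ → ℂ) = ((√2 : ℝ) : ℂ) ^ n • 1 := by
    rw [_root_.smul_pow, ← M.map_intCast_pow] at h
    rw [← h, smul_smul, ← mul_pow, mul_inv_cancel₀ (by simp), one_pow, one_smul]
  ext p q
  have entry := congr_fun₂ hMn p q
  simp only [Matrix.map_apply, Matrix.smul_apply, one_apply, smul_eq_mul, mul_ite, mul_one,
    mul_zero] at entry ⊢
  rw [zero_apply, ZMod.intCast_eq_zero_iff_even]
  split_ifs at entry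
  · exact Int.even_of_cast_eq_sqrt_two_pow hn (by exact_mod_cast entry)
  · simp [show (M ^ n) p q = 0 by exact_mod_cast entry]

theorem Matrix.mul_pow_eq_pow_mul_of_mul_eq {m n R : Type*} [Fintype m] [DecidableEq m]
    [Fintype n] [DecidableEq n] [Semiring R] {A : Matrix m m R} {B : Matrix n n R}
    {C : Matrix m n R} (h : C * B = A * C) (k : ℕ) : C * B ^ k = A ^ k * C := by
  induction k with
  | zero => simp
  | succ k ih => rw [pow_succ, pow_succ, ← Matrix.mul_assoc, ih, Matrix.mul_assoc, h,
      Matrix.mul_assoc]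

def coinSum (m c R : Type*) [DecidableEq m] [Zero R] [One R] : Matrix m (m × c) R :=
  of fun k x => if k = x.1 then 1 else 0

section coinSum

variable {m c R : Type*} [Fintype m] [DecidableEq m] [NonAssocSemiring R]

theorem mul_coinSum {l : Type*} (M : Matrix l m R) :
    M * coinSum m c R = M.submatrix id Prod.fst := by
  ext
  simp [coinSum, mul_apply]

theorem coinSum_mul_apply {n : Type*} [Fintype c] (B : Matrix (m × c) n R) (k : m) (y : n) :
    (coinSum m c R * B) k y = ∑ i, B (k, i) y := by
  rw [mul_apply, Fintype.sum_prod_type, Finset.sum_eq_single k]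
  · simp [coinSum]
  · intro k' _ hk'
    simp [coinSum, Ne.symm hk']
  · simp

end coinSum

theorem sum_hadUInt_apply_cast_zmod_two (N : ℕ) (k l : Fin N) (j : Fin 2) :
    ∑ i, ((hadUInt N (k, i) (l, j) : ℤ) : ZMod 2) = adjC N k l := by
  simp only [hadUInt, adjC, Fin.sum_univ_two]
  fin_cases j <;> split_ifs <;> simp <;> decide

theorem coinSum_mul_map_hadUInt (N : ℕ) :
    coinSum (Fin N) (Fin 2) (ZMod 2) * (hadUInt N).map (Int.cast : ℤ → ZMod 2) =
      (adjC N).map (Int.cast : ℤ → ZMod 2) * coinSum (Fin N) (Fin 2) (ZMod 2) := by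
  ext k ⟨l, j⟩
  rw [coinSum_mul_apply, mul_coinSum]
  exact sum_hadUInt_apply_cast_zmod_two N k l j

theorem hadamard_walk_power_identity_implies_even_paths_general (N : ℕ)
    (n : ℕ) (hn : 1 ≤ n) (h : hadU N ^ n = 1) :
    ∀ k l : Fin N, Even ((adjC N ^ n) k l) := by
  rw [hadU_eq_smul_map_hadUInt] at h
  have hM := (hadUInt N).map_pow_eq_zero_of_inv_sqrt_two_smul_pow_eq_one
    (Nat.one_le_iff_ne_zero.mp hn) h
  have hA : (adjC N).map (Int.cast : ℤ → ZMod 2) ^ n * coinSum (Fin N) (Fin 2) (ZMod 2) = 0 := by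
    rw [← Matrix.mul_pow_eq_pow_mul_of_mul_eq (coinSum_mul_map_hadUInt N),
      ← Matrix.map_intCast_pow, hM, Matrix.mul_zero]
  intro k l
  have hkl := congr_fun₂ hA k (l, 0)
  rw [mul_coinSum, ← Matrix.map_intCast_pow] at hkl
  exact ZMod.intCast_eq_zero_iff_even.mp (by simpa using hkl)

theorem hadamard_walk_power_identity_implies_even_paths (N : ℕ) (hN : 2 ≤ N)
    (n : ℕ) (hn : 1 ≤ n) (h : hadU N ^ n = 1) :
    ∀ k l : Fin N, Even ((adjC N ^ n) k l) :=
  hadamard_walk_power_identity_implies_even_paths_general N n hn h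
end

section
/- For every odd N ≥ 3, the Hadamard walk on the cycle C_N is not periodic: there is no n ≥ 1 with (U_N)ⁿ = I_{2N}. -/
open Polynomial Matrix

/-!
If `U ^ n = 1`, the eigenvalues `λᵢ` of `U` are roots of unity, hence algebraic integers, and so is
`e₂ = ∑_{i<j} λᵢ λⱼ`. Writing `U = S ⊗ P + Sᵀ ⊗ Q` with `S` the cyclic shift gives `tr U = 0` and,
for `N ≥ 3`, `tr U² = N`. Hence `2 e₂ = (∑ λᵢ)² - ∑ λᵢ² = -N`, so `N / 2` is a rational algebraic
integer, i.e. an integer, and `N` is even.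
-/

open scoped Kronecker

theorem Multiset.exists_mem_sq_sum_eq {R : Type*} [CommRing R] (S : Subring R) (s : Multiset R)
    (hs : ∀ x ∈ s, x ∈ S) : ∃ t ∈ S, s.sum ^ 2 = (s.map (· ^ 2)).sum + 2 * t := by
  induction s using Multiset.induction with
  | empty => exact ⟨0, S.zero_mem, by simp⟩
  | cons a s ih =>
    obtain ⟨t, htS, ht⟩ := ih fun x hx => hs x (mem_cons_of_mem hx)
    refine ⟨t + a * s.sum, S.add_mem htS (S.mul_mem (hs a (mem_cons_self a s))
      (S.multiset_sum_mem s fun x hx => hs x (mem_cons_of_mem hx))), ?_⟩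
    rw [sum_cons, map_cons, sum_cons]
    linear_combination ht

theorem Int.even_of_eq_two_mul_isIntegral {K : Type*} [Field K] [CharZero K] {k : ℤ} {t : K}
    (ht : IsIntegral ℤ t) (h : (k : K) = 2 * t) : Even k := by
  have ht' : t = algebraMap ℚ K (k / 2) := by
    rw [map_div₀, map_intCast, map_ofNat, h]
    ring
  rw [ht', isIntegral_algebraMap_iff (algebraMap ℚ K).injective,
    IsIntegrallyClosed.isIntegral_iff] at ht
  obtain ⟨m, hm⟩ := ht
  refine ⟨m, ?_⟩
  have : (k : ℚ) = m + m := by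
    rw [eq_intCast] at hm
    rw [hm]
    ring
  exact_mod_cast this

namespace Matrix

theorem trace_sq_kronecker_add_kronecker {m n R : Type*} [Fintype m] [Fintype n] [DecidableEq m]
    [DecidableEq n] [CommRing R] (A B : Matrix m m R) (P Q : Matrix n n R) :
    trace ((A ⊗ₖ P + B ⊗ₖ Q) ^ 2) = trace (A ^ 2) * trace (P ^ 2) + trace (A * B) * trace (P * Q)
      + trace (B * A) * trace (Q * P) + trace (B ^ 2) * trace (Q ^ 2) := by
  simp only [sq, add_mul, mul_add, ← mul_kronecker_mul, trace_add, trace_kronecker]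
  ring

variable {n K : Type*} [Fintype n] [DecidableEq n] [Field K]

theorem pow_eq_one_of_mem_roots_charpoly {M : Matrix n n K} {m : ℕ} (hM : M ^ m = 1) {x : K}
    (hx : x ∈ M.charpoly.roots) : x ^ m = 1 := by
  cases isEmpty_or_nonempty n
  · simp at hx
  have h := spectrum.pow_mem_pow M m
    (mem_spectrum_iff_isRoot_charpoly.mpr (isRoot_of_mem_roots hx))
  rwa [hM, spectrum.one_eq, Set.mem_singleton_iff] at h

variable [IsAlgClosed K]

theorem det_scalar_sub_eq_prod_roots (M : Matrix n n K) (w : K) :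
    (scalar n w - M).det = (M.charpoly.roots.map (w - ·)).prod := by
  rw [← eval_charpoly, (IsAlgClosed.splits _).eval_eq_prod_roots_of_monic M.charpoly_monic]

theorem charpoly_sq (M : Matrix n n K) :
    (M ^ 2).charpoly = ((M.charpoly.roots.map (· ^ 2)).map (X - C ·)).prod := by
  refine Polynomial.funext fun z => ?_
  obtain ⟨w, rfl⟩ := IsAlgClosed.exists_pow_nat_eq z two_pos
  have hcard : M.charpoly.roots.card = Fintype.card n := by
    rw [← (IsAlgClosed.splits _).natDegree_eq_card_roots, charpoly_natDegree_eq_dim]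
  have hfactor : scalar n (w ^ 2) - M ^ 2 = -(scalar n w - M) * (scalar n (-w) - M) := by
    have hw : scalar n w * M = M * scalar n w := scalar_commute w (fun _ => mul_comm _ _) M
    simp only [sq, map_mul, map_neg, neg_mul, sub_mul, mul_sub, mul_neg, hw]
    abel
  rw [eval_charpoly, hfactor, det_mul, det_neg, det_scalar_sub_eq_prod_roots,
    det_scalar_sub_eq_prod_roots, eval_multiset_prod, Multiset.map_map, Multiset.map_map, ← hcard,
    mul_right_comm, ← Multiset.card_map (fun x => -w - x), ← Multiset.prod_map_neg,
    Multiset.map_map, ← Multiset.prod_map_mul]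
  refine congrArg _ (Multiset.map_congr rfl fun x _ => ?_)
  simp only [Function.comp_apply, eval_sub, eval_X, eval_C]
  ring

theorem sum_map_sq_roots_charpoly (M : Matrix n n K) :
    (M.charpoly.roots.map (· ^ 2)).sum = (M ^ 2).trace := by
  rw [trace_eq_sum_roots_charpoly, charpoly_sq, roots_multiset_prod_X_sub_C]

end Matrix

theorem val_finRotate {N : ℕ} (k : Fin N) : (finRotate N k : ℕ) = ((k : ℕ) + 1) % N := by
  have := k.neZero
  rw [finRotate_apply, Fin.val_add, Fin.val_one', Nat.add_mod_mod]

theorem finRotate_finRotate_ne {N : ℕ} (hN : 3 ≤ N) (k : Fin N) :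
    finRotate N (finRotate N k) ≠ k := by
  intro h
  have hk := k.isLt
  replace h := congrArg Fin.val h
  rw [val_finRotate, val_finRotate, Nat.mod_add_mod] at h
  rcases Nat.lt_or_ge ((k : ℕ) + 2) N with hlt | hge
  · rw [Nat.mod_eq_of_lt hlt] at h
    omega
  · rw [Nat.mod_eq_sub_mod hge, Nat.mod_eq_of_lt (by omega)] at h
    omega

theorem inv_ofReal_sqrt_two_sq : ((Real.sqrt 2 : ℝ) : ℂ)⁻¹ ^ 2 = 1 / 2 := by
  rw [inv_pow, ← Complex.ofReal_pow, Real.sq_sqrt zero_le_two]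
  norm_num

theorem trace_Pmat_add_trace_Qmat : Pmat.trace + Qmat.trace = 0 := by
  simp [Pmat, Qmat, trace_fin_two]

theorem trace_Pmat_mul_Qmat : (Pmat * Qmat).trace = 1 / 2 := by
  simpa [Pmat, Qmat, trace_fin_two, sq] using inv_ofReal_sqrt_two_sq

theorem trace_Qmat_mul_Pmat : (Qmat * Pmat).trace = 1 / 2 := by
  rw [trace_mul_comm, trace_Pmat_mul_Qmat]

theorem hadU_eq_kronecker (N : ℕ) :
    hadU N = (finRotate N).permMatrix ℂ ⊗ₖ Pmat + ((finRotate N).permMatrix ℂ)ᵀ ⊗ₖ Qmat := by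
  ext ⟨k, i⟩ ⟨l, j⟩
  simp only [hadU, Matrix.add_apply, kroneckerMap_apply, transpose_apply, PEquiv.toMatrix_apply,
    Equiv.toPEquiv_apply, Option.mem_def, Option.some.injEq, Fin.ext_iff, val_finRotate, ite_mul,
    one_mul, zero_mul, eq_comm (a := ((k : ℕ) + 1) % N)]

theorem trace_hadU (N : ℕ) : (hadU N).trace = 0 := by
  rw [hadU_eq_kronecker, trace_add, trace_kronecker, trace_kronecker, trace_transpose, ← mul_add,
    trace_Pmat_add_trace_Qmat, mul_zero]

theorem trace_hadU_sq {N : ℕ} (hN : 3 ≤ N) : (hadU N ^ 2).trace = N := by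
  set S := (finRotate N).permMatrix ℂ
  have hSSt : S * Sᵀ = 1 := by simp [S, ← permMatrix_mul]
  have hStS : Sᵀ * S = 1 := by simp [S, ← permMatrix_mul]
  have hS2 : (S ^ 2).trace = 0 := by
    have : Function.fixedPoints (finRotate N * finRotate N) = ∅ :=
      Set.eq_empty_of_forall_notMem (finRotate_finRotate_ne hN)
    rw [sq, ← permMatrix_mul, trace_permutation, this, Set.ncard_empty, Nat.cast_zero]
  rw [hadU_eq_kronecker, trace_sq_kronecker_add_kronecker, hSSt, hStS, ← transpose_pow,
    trace_transpose, hS2, trace_one, trace_Pmat_mul_Qmat, trace_Qmat_mul_Pmat, Fintype.card_fin]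
  ring

theorem hadamard_walk_odd_cycle_not_periodic (N : ℕ) (hN : 3 ≤ N)
    (hodd : Odd N) : ¬∃ n : ℕ, 1 ≤ n ∧ hadU N ^ n = 1 := by
  rintro ⟨n, hn, hUn⟩
  obtain ⟨t, ht, hsq⟩ := (hadU N).charpoly.roots.exists_mem_sq_sum_eq
    (integralClosure ℤ ℂ).toSubring fun x hx =>
      IsIntegral.of_pow hn ((pow_eq_one_of_mem_roots_charpoly hUn hx).symm ▸ isIntegral_one)
  rw [← trace_eq_sum_roots_charpoly, trace_hadU, sum_map_sq_roots_charpoly, trace_hadU_sq hN]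
    at hsq
  have hNeven : Even (-(N : ℤ)) :=
    Int.even_of_eq_two_mul_isIntegral ht (by push_cast; linear_combination hsq)
  exact Nat.not_even_iff_odd.mpr hodd (by simpa [Int.even_coe_nat] using hNeven)
end

section
/- The characteristic polynomial of the Hadamard walk on the cycle C₄ equals Φ₁(λ)² Φ₂(λ)² Φ₈(λ), where Φ_n is the n-th cyclotomic polynomial; consequently the period of the walk is lcm(1,2,8) = 8. -/
open Polynomial Matrix

/-!
The walk commutes with the rotation of `C₄`, so a discrete Fourier transform in the position
variable block-diagonalises it: `U₄` is conjugate to the direct sum of the `2 × 2` symbols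
`ω P + ω⁻¹ Q` over the fourth roots of unity `ω`. The transform is done in two radix-2 steps, each
using that `[[A, B], [ζ² B, A]]` is conjugate to `diag (A + ζ B, A - ζ B)`. For `ω = ±1` the symbol
is `±H`, with `H` the Hadamard coin, so it has characteristic polynomial `X² - 1` and squares to
`1`. For `ω = ±i` it is `±i (P - Q)`; its square is the rotation by `π / 2`, so it has order `8`,
and the characteristic polynomials of the two signs multiply to `X⁴ + 1`.
-/

theorem IsConj.pow_eq_one_iff {M : Type*} [Monoid M] {a b : M} (h : IsConj a b) (k : ℕ) :
    a ^ k = 1 ↔ b ^ k = 1 :=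
  ⟨fun ha => isConj_one_right.mp (ha ▸ h.pow k), fun hb => isConj_one_left.mp (hb ▸ h.pow k)⟩

theorem IsConj.fromBlocks_diagonal {R n m : Type*} [CommRing R] [Fintype n] [DecidableEq n]
    [Fintype m] [DecidableEq m] {A A' : Matrix n n R} {D D' : Matrix m m R}
    (hA : IsConj A A') (hD : IsConj D D') :
    IsConj (fromBlocks A 0 0 D) (fromBlocks A' 0 0 D') := by
  obtain ⟨c, hc⟩ := hA
  obtain ⟨d, hd⟩ := hD
  refine ⟨Units.mkOfMulEqOne (fromBlocks c 0 0 d) (fromBlocks ↑c⁻¹ 0 0 ↑d⁻¹) ?_, ?_⟩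
  · simp [fromBlocks_multiply, fromBlocks_one]
  · simp [SemiconjBy, fromBlocks_multiply, hc.eq, hd.eq]

theorem Polynomial.cyclotomic_two_pow_succ (R : Type*) [CommRing R] (k : ℕ) :
    cyclotomic (2 ^ (k + 1)) R = X ^ 2 ^ k + 1 := by
  rw [cyclotomic_prime_pow_eq_geom_sum Nat.prime_two, Finset.sum_range_succ,
    Finset.sum_range_one, pow_zero, pow_one, add_comm]

namespace Matrix

theorem fromBlocks_diagonal_eq_one_iff {R n m : Type*} [Semiring R] [DecidableEq n]
    [DecidableEq m] {A : Matrix n n R} {D : Matrix m m R} :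
    fromBlocks A 0 0 D = 1 ↔ A = 1 ∧ D = 1 := by
  rw [← fromBlocks_one, fromBlocks_inj]
  simp

variable {n : Type*} [Fintype n] [DecidableEq n]

theorem charpoly_eq_of_isConj {R : Type*} [CommRing R] {M N : Matrix n n R} (h : IsConj M N) :
    M.charpoly = N.charpoly := by
  obtain ⟨c, hc⟩ := h
  rw [← charpoly_units_conj c M, hc.eq, mul_assoc, ← coe_units_inv, Units.mul_inv, mul_one]

theorem isConj_fromBlocks_smul_sq {K : Type*} [Field K] {ζ : K} (A B : Matrix n n K)
    (h2 : (2 : K) ≠ 0) (hζ : ζ ≠ 0) :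
    IsConj (fromBlocks A B (ζ ^ 2 • B) A) (fromBlocks (A + ζ • B) 0 0 (A - ζ • B)) := by
  let T : Matrix (n ⊕ n) (n ⊕ n) K := fromBlocks (ζ • 1) 1 (ζ • 1) (-1)
  let T' : Matrix (n ⊕ n) (n ⊕ n) K := (2 * ζ)⁻¹ • fromBlocks 1 1 (ζ • 1) (-ζ • 1)
  have hTT' : T * T' = 1 := by
    rw [← fromBlocks_one]
    simp only [T, T', Matrix.mul_smul, fromBlocks_multiply, fromBlocks_smul, fromBlocks_inj,
      Matrix.mul_one, smul_smul, smul_neg]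
    refine ⟨?_, ?_, ?_, ?_⟩ <;> match_scalars <;> field_simp <;> ring
  refine ⟨Units.mkOfMulEqOne T T' hTT', ?_⟩
  change T * _ = _ * T
  simp only [T, fromBlocks_multiply, fromBlocks_inj, Matrix.mul_smul, Matrix.smul_mul,
    Matrix.mul_one, Matrix.one_mul, Matrix.mul_neg, Matrix.neg_mul, add_zero, zero_add, neg_zero]
  refine ⟨?_, ?_, ?_, ?_⟩ <;> module

end Matrix

def coinedCycleWalk {m R : Type*} [AddZeroClass R] (N : ℕ) (P Q : Matrix m m R) :
    Matrix (Fin N × m) (Fin N × m) R :=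
  fun ki lj =>
    (if (lj.1 : ℕ) = ((ki.1 : ℕ) + 1) % N then P ki.2 lj.2 else 0) +
    (if ((lj.1 : ℕ) + 1) % N = (ki.1 : ℕ) then Q ki.2 lj.2 else 0)

theorem hadU_eq_coinedCycleWalk (N : ℕ) : hadU N = coinedCycleWalk N Pmat Qmat := rfl

/-- The Fourier component of a coined walk on a cycle at the character `k ↦ ω ^ k`. -/
def walkSymbol {m R : Type*} [Field R] (P Q : Matrix m m R) (ω : R) : Matrix m m R :=
  ω • P + ω⁻¹ • Q

theorem walkSymbol_neg {m R : Type*} [Field R] (P Q : Matrix m m R) (ω : R) :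
    walkSymbol P Q (-ω) = -walkSymbol P Q ω := by
  rw [walkSymbol, walkSymbol, inv_neg, neg_smul, neg_smul, neg_add]

def cycleFourEquiv (m : Type*) : Fin 4 × m ≃ (m ⊕ m) ⊕ (m ⊕ m) where
  toFun x := ![.inl (.inl x.2), .inl (.inr x.2), .inr (.inl x.2), .inr (.inr x.2)] x.1
  invFun := Sum.elim (Sum.elim ((0 : Fin 4), ·) ((1 : Fin 4), ·))
    (Sum.elim ((2 : Fin 4), ·) ((3 : Fin 4), ·))
  left_inv := by
    rintro ⟨k, c⟩
    fin_cases k <;> rfl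
  right_inv := by
    rintro ((c | c) | (c | c)) <;> rfl

theorem reindex_coinedCycleWalk_four {m R : Type*} [AddZeroClass R] (P Q : Matrix m m R) :
    reindex (cycleFourEquiv m) (cycleFourEquiv m) (coinedCycleWalk 4 P Q) =
      fromBlocks (fromBlocks 0 P Q 0) (fromBlocks 0 Q P 0)
        (fromBlocks 0 Q P 0) (fromBlocks 0 P Q 0) := by
  ext ((i | i) | (i | i)) ((j | j) | (j | j)) <;> simp [coinedCycleWalk, cycleFourEquiv]

open Complex

section CycleFour

variable {m : Type*} [Fintype m] [DecidableEq m] (P Q : Matrix m m ℂ)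

theorem isConj_reindex_coinedCycleWalk_four :
    IsConj (reindex (cycleFourEquiv m) (cycleFourEquiv m) (coinedCycleWalk 4 P Q))
      (fromBlocks (fromBlocks (walkSymbol P Q 1) 0 0 (walkSymbol P Q (-1))) 0 0
        (fromBlocks (walkSymbol P Q I) 0 0 (walkSymbol P Q (-I)))) := by
  have hsum : fromBlocks 0 P Q 0 + fromBlocks 0 Q P 0 =
      fromBlocks 0 (P + Q) ((1 : ℂ) ^ 2 • (P + Q)) 0 := by
    simp [fromBlocks_add, add_comm]
  have hdiff : fromBlocks 0 P Q 0 - fromBlocks 0 Q P 0 =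
      fromBlocks 0 (P - Q) (I ^ 2 • (P - Q)) 0 := by
    simp [sub_eq_add_neg, fromBlocks_neg, fromBlocks_add, add_comm]
  have h₁ := isConj_fromBlocks_smul_sq (fromBlocks 0 P Q 0) (fromBlocks 0 Q P 0)
    two_ne_zero one_ne_zero
  have h₂ := isConj_fromBlocks_smul_sq (0 : Matrix m m ℂ) (P + Q) two_ne_zero one_ne_zero
  have h₃ := isConj_fromBlocks_smul_sq (0 : Matrix m m ℂ) (P - Q) two_ne_zero I_ne_zero
  simp only [one_pow, one_smul] at h₁
  rw [hsum, hdiff] at h₁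
  rw [reindex_coinedCycleWalk_four]
  refine h₁.trans (.fromBlocks_diagonal ?_ ?_)
  · convert h₂ using 2 <;> simp only [walkSymbol, inv_one, inv_neg] <;> module
  · convert h₃ using 2 <;> simp only [walkSymbol, inv_neg, inv_I] <;> module

theorem charpoly_coinedCycleWalk_four :
    (coinedCycleWalk 4 P Q).charpoly =
      (walkSymbol P Q 1).charpoly * (walkSymbol P Q (-1)).charpoly *
        ((walkSymbol P Q I).charpoly * (walkSymbol P Q (-I)).charpoly) := by
  rw [← charpoly_reindex (cycleFourEquiv m),
    charpoly_eq_of_isConj (isConj_reindex_coinedCycleWalk_four P Q), charpoly_fromBlocks_zero₁₂,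
    charpoly_fromBlocks_zero₁₂, charpoly_fromBlocks_zero₁₂]

theorem coinedCycleWalk_four_pow_eq_one_iff (k : ℕ) :
    coinedCycleWalk 4 P Q ^ k = 1 ↔
      (walkSymbol P Q 1 ^ k = 1 ∧ walkSymbol P Q (-1) ^ k = 1) ∧
        (walkSymbol P Q I ^ k = 1 ∧ walkSymbol P Q (-I) ^ k = 1) := by
  rw [← map_eq_one_iff _ (reindexAlgEquiv ℂ ℂ (cycleFourEquiv m)).injective, map_pow,
    coe_reindexAlgEquiv, (isConj_reindex_coinedCycleWalk_four P Q).pow_eq_one_iff,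
    fromBlocks_diagonal_pow, fromBlocks_diagonal_pow, fromBlocks_diagonal_pow,
    fromBlocks_diagonal_eq_one_iff, fromBlocks_diagonal_eq_one_iff, fromBlocks_diagonal_eq_one_iff]

end CycleFour

theorem inv_sqrt_two_sq : (((√2 : ℝ) : ℂ)⁻¹) ^ 2 = 2⁻¹ := by
  rw [inv_pow, ← ofReal_pow, Real.sq_sqrt zero_le_two, ofReal_ofNat]

theorem walkSymbol_Pmat_Qmat (ω : ℂ) :
    walkSymbol Pmat Qmat ω = ((√2 : ℝ) : ℂ)⁻¹ • !![ω, ω; ω⁻¹, -ω⁻¹] := by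
  ext i j
  fin_cases i <;> fin_cases j <;> simp [walkSymbol, Pmat, Qmat, mul_comm]

theorem charpoly_walkSymbol_Pmat_Qmat {ω : ℂ} (hω : ω ≠ 0) :
    (walkSymbol Pmat Qmat ω).charpoly = X ^ 2 - C (((√2 : ℝ) : ℂ)⁻¹ * (ω - ω⁻¹)) * X - 1 := by
  have htrace : (walkSymbol Pmat Qmat ω).trace = ((√2 : ℝ) : ℂ)⁻¹ * (ω - ω⁻¹) := by
    rw [walkSymbol_Pmat_Qmat, trace_smul, trace_fin_two_of, smul_eq_mul, sub_eq_add_neg]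
  have hdet : (walkSymbol Pmat Qmat ω).det = -1 := by
    rw [walkSymbol_Pmat_Qmat, det_smul, det_fin_two_of, Fintype.card_fin, inv_sqrt_two_sq]
    field_simp
    ring
  rw [charpoly_fin_two, htrace, hdet, C_neg, C_1, ← sub_eq_add_neg]

theorem charpoly_hadU_four : (hadU 4).charpoly = (X ^ 2 - 1) ^ 2 * (X ^ 4 + 1) := by
  rw [hadU_eq_coinedCycleWalk, charpoly_coinedCycleWalk_four,
    charpoly_walkSymbol_Pmat_Qmat one_ne_zero,
    charpoly_walkSymbol_Pmat_Qmat (neg_ne_zero.2 one_ne_zero),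
    charpoly_walkSymbol_Pmat_Qmat I_ne_zero,
    charpoly_walkSymbol_Pmat_Qmat (neg_ne_zero.2 I_ne_zero)]
  set c := ((√2 : ℝ) : ℂ)⁻¹ * (I - I⁻¹)
  have hc : C c ^ 2 = -2 := by
    rw [← C_pow, mul_pow, inv_sqrt_two_sq, inv_I, sub_neg_eq_add, ← two_mul, mul_pow, I_sq]
    norm_num [map_ofNat]
  have hneg : ((√2 : ℝ) : ℂ)⁻¹ * (-I - (-I)⁻¹) = -c := by
    rw [inv_neg]
    ring
  rw [hneg, inv_one, sub_self, mul_zero, inv_neg, inv_one, sub_neg_eq_add, neg_add_cancel,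
    mul_zero, C_0, C_neg]
  linear_combination (-(X ^ 2 - 1) ^ 2 * X ^ 2) * hc

theorem walkSymbol_Pmat_Qmat_one_sq : walkSymbol Pmat Qmat 1 ^ 2 = 1 := by
  rw [walkSymbol_Pmat_Qmat, _root_.smul_pow, inv_sqrt_two_sq, sq, mul_fin_two]
  ext i j
  fin_cases i <;> fin_cases j <;> norm_num

theorem walkSymbol_Pmat_Qmat_I_pow_four : walkSymbol Pmat Qmat I ^ 4 = -1 := by
  have hsq : walkSymbol Pmat Qmat I ^ 2 = !![0, -1; 1, 0] := by
    rw [walkSymbol_Pmat_Qmat, _root_.smul_pow, inv_sqrt_two_sq, sq, mul_fin_two]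
    ext i j
    fin_cases i <;> fin_cases j <;> norm_num
  rw [show 4 = 2 * 2 from rfl, pow_mul, hsq, sq, mul_fin_two]
  ext i j
  fin_cases i <;> fin_cases j <;> simp

theorem orderOf_hadU_four : orderOf (hadU 4) = 8 := by
  have hpow := coinedCycleWalk_four_pow_eq_one_iff Pmat Qmat
  simp only [← hadU_eq_coinedCycleWalk, walkSymbol_neg] at hpow
  have h4 : ¬ hadU 4 ^ 4 = 1 := fun h => by
    have hI := ((hpow 4).1 h).2.1
    rw [walkSymbol_Pmat_Qmat_I_pow_four] at hI
    exact absurd (congrFun₂ hI 0 0) (by norm_num)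
  have h8 : hadU 4 ^ 8 = 1 := by
    have h1 : walkSymbol Pmat Qmat 1 ^ 8 = 1 := by
      rw [show 8 = 2 * 4 from rfl, pow_mul, walkSymbol_Pmat_Qmat_one_sq, one_pow]
    have hI : walkSymbol Pmat Qmat I ^ 8 = 1 := by
      rw [show 8 = 4 * 2 from rfl, pow_mul, walkSymbol_Pmat_Qmat_I_pow_four]
      norm_num
    have heven : Even 8 := by decide
    rw [hpow, heven.neg_pow, heven.neg_pow]
    exact ⟨⟨h1, h1⟩, hI, hI⟩
  exact orderOf_eq_prime_pow (p := 2) (n := 2) h4 h8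

theorem hadamard_walk_C4_charpoly_and_period :
    (hadU 4).charpoly =
      cyclotomic 1 ℂ ^ 2 * cyclotomic 2 ℂ ^ 2 * cyclotomic 8 ℂ ∧
    IsLeast {n : ℕ | 1 ≤ n ∧ hadU 4 ^ n = 1} 8 := by
  refine ⟨?_, ⟨by norm_num, ?_⟩, fun k ⟨hk, hpow⟩ => ?_⟩
  · rw [charpoly_hadU_four, cyclotomic_one, cyclotomic_two,
      show 8 = 2 ^ (2 + 1) from rfl, cyclotomic_two_pow_succ]
    ring
  · rw [← orderOf_hadU_four, pow_orderOf_eq_one]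
  · rw [← orderOf_hadU_four]
    exact orderOf_le_of_pow_eq_one hk hpow
end

section
/- If a monic polynomial with degree 4 has all its roots being roots of unity and is a product over ℂ of factors of the form λ² + i√2 sin θ λ − 1, then it cannot equal λ⁴ − λ²/2 + 1; in particular the roots of λ² + (i/√2)λ − 1 (a factor of λ⁴ − λ²/2 + 1 arising from θ = 2π/3) are not all roots of unity. -/
/-!
A root of unity `w` is an algebraic integer, and so is its conjugate; hence `2 * re w` is an
algebraic integer, and an integer as soon as it is rational. The roots of `λ⁴ - λ²/2 + 1` square
to `(1 ± i√15)/4`, and the root `(√7 - i)/(2√2)` of `λ² + (i/√2)λ - 1` squares to `(3 - i√7)/4`.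
Both squares have real part an odd multiple of `1/4`, so neither they nor their square roots are
roots of unity.
-/

open Polynomial

namespace Complex

theorem isIntegral_of_pow_eq_one {w : ℂ} {m : ℕ} (hm : m ≠ 0) (hw : w ^ m = 1) :
    IsIntegral ℤ w :=
  .of_pow (Nat.pos_of_ne_zero hm) (hw ▸ isIntegral_one)

theorem isIntegral_two_mul_re {w : ℂ} (hw : IsIntegral ℤ w) : IsIntegral ℤ (2 * w.re) := by
  rw [← isIntegral_algHom_iff ofRealHom.toIntAlgHom ofReal_injective]
  simpa [add_conj] using hw.add (hw.map (starRingEnd ℂ).toIntAlgHom)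

theorem pow_ne_one_of_re_eq_odd_div_four {w : ℂ} {a : ℤ} (ha : Odd a) (hw : w.re = a / 4)
    {m : ℕ} (hm : m ≠ 0) : w ^ m ≠ 1 := by
  intro h
  have hre : 2 * w.re = ((a / 2 : ℚ) : ℝ) := by rw [hw]; push_cast; ring
  obtain ⟨k, hk⟩ :=
    (isIntegral_two_mul_re (isIntegral_of_pow_eq_one hm h)).exists_int_iff_exists_rat.1 ⟨_, hre⟩
  have hak : a = 2 * k := by
    rw [hre] at hk
    push_cast at hk
    exact_mod_cast (by linarith : (a : ℝ) = 2 * k)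
  obtain ⟨j, rfl⟩ := ha
  omega

theorem pow_ne_one_of_sq_re_eq_odd_div_four {w : ℂ} {a : ℤ} (ha : Odd a)
    (hw : (w ^ 2).re = a / 4) {m : ℕ} (hm : m ≠ 0) : w ^ m ≠ 1 := fun h =>
  pow_ne_one_of_re_eq_odd_div_four ha hw hm (by rw [pow_right_comm, h, one_pow])

theorem exists_root_quartic_forall_pow_ne_one :
    ∃ z : ℂ, (X ^ 4 - C (1 / 2 : ℂ) * X ^ 2 + 1 : ℂ[X]).eval z = 0 ∧ ∀ m ≠ 0, z ^ m ≠ 1 := by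
  have h15 : ((√15 : ℝ) : ℂ) ^ 2 = 15 := by norm_cast; simp
  obtain ⟨z, hz⟩ := IsAlgClosed.exists_pow_nat_eq ((1 - (√15 : ℝ) * I) / 4 : ℂ) two_pos
  refine ⟨z, ?_, fun m hm => pow_ne_one_of_sq_re_eq_odd_div_four (a := 1) odd_one
    (by simp [hz]) hm⟩
  simp only [eval_add, eval_sub, eval_mul, eval_pow, eval_X, eval_C, eval_one]
  rw [show z ^ 4 = (z ^ 2) ^ 2 by ring, hz]
  linear_combination (I ^ 2 / 16) * h15 + (15 / 16 : ℂ) * I_sq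

theorem exists_root_walk_factor_forall_pow_ne_one :
    ∃ z : ℂ, (X ^ 2 + C (I / ((√2 : ℝ) : ℂ)) * X - 1 : ℂ[X]).eval z = 0 ∧
      ∀ m ≠ 0, z ^ m ≠ 1 := by
  have h7 : ((√7 : ℝ) : ℂ) ^ 2 = 7 := by norm_cast; simp
  have h2 : ((√2 : ℝ) : ℂ) ^ 2 = 2 := by norm_cast; simp
  have hsq : (((√7 : ℝ) - I) / (2 * (√2 : ℝ))) ^ 2 = (3 - (√7 : ℝ) * I) / 4 := by
    field_simp
    linear_combination 4 * h7 + 4 * I_sq + (4 * (√7 : ℝ) * I - 12) * h2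
  refine ⟨((√7 : ℝ) - I) / (2 * (√2 : ℝ)), ?_, fun m hm =>
    pow_ne_one_of_sq_re_eq_odd_div_four (a := 3) ⟨1, rfl⟩ (by simp [hsq]) hm⟩
  simp only [eval_add, eval_sub, eval_mul, eval_pow, eval_X, eval_C, eval_one]
  field_simp
  linear_combination h7 - I_sq - 4 * h2

end Complex

theorem quartic_product_of_walk_factors_ne :
    (∀ p : ℂ[X], p.Monic → p.degree = 4 →
      (∀ z : ℂ, p.eval z = 0 → ∃ m : ℕ, 1 ≤ m ∧ z ^ m = 1) →
      (∃ θ₁ θ₂ : ℝ,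
        p = (X ^ 2 + C (Complex.I * ((Real.sqrt 2 : ℝ) : ℂ) *
                ((Real.sin θ₁ : ℝ) : ℂ)) * X - 1) *
            (X ^ 2 + C (Complex.I * ((Real.sqrt 2 : ℝ) : ℂ) *
                ((Real.sin θ₂ : ℝ) : ℂ)) * X - 1)) →
      p ≠ X ^ 4 - C (1 / 2 : ℂ) * X ^ 2 + 1) ∧
    ∃ z : ℂ,
      (X ^ 2 + C (Complex.I / ((Real.sqrt 2 : ℝ) : ℂ)) * X - 1 : ℂ[X]).eval z = 0 ∧
      ∀ m : ℕ, 1 ≤ m → z ^ m ≠ 1 := by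
  constructor
  · rintro p - - hroots - rfl
    obtain ⟨z, hz, hz_pow⟩ := Complex.exists_root_quartic_forall_pow_ne_one
    obtain ⟨m, hm, h⟩ := hroots z hz
    exact hz_pow m (by omega) h
  · obtain ⟨z, hz, hz_pow⟩ := Complex.exists_root_walk_factor_forall_pow_ne_one
    exact ⟨z, hz, fun m hm => hz_pow m (by omega)⟩
end
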